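/- The complete bipartite graph K_{3,3} has matching book thickness 3, i.e., K_{3,3} is dispersable. -/

import Mathlib

open SimpleGraph

variable {V : Type*}

/-- The degree of a vertex (number of neighbours). -/
noncomputable def deg (G : SimpleGraph V) (v : V) : ℕ := Nat.card {w | G.Adj v w}

/-- A matching book embedding of `G` in `n` pages: the vertices are placed
injectively on a spine (the natural numbers), each edge is assigned a page,
no two edges on a common page cross (their endpoints do not interleave in the
spine order), and on each page every vertex is incident to at most one edge. -/
structure MatchingBookEmbedding (G : SimpleGraph V) (n : ℕ) where
  pos : V ↪ ℕ
  page : Sym2 V → Fin n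
  nocross : ∀ a b x y, G.Adj a b → G.Adj x y → page s(a,b) = page s(x,y) →
    ¬ (pos a < pos x ∧ pos x < pos b ∧ pos b < pos y)
  matching : ∀ v a b, G.Adj v a → G.Adj v b → a ≠ b → page s(v,a) ≠ page s(v,b)

/-- The matching book thickness: the least number of pages of a matching book
embedding. -/
noncomputable def mbt (G : SimpleGraph V) : ℕ :=
  sInf {n | Nonempty (MatchingBookEmbedding G n)}

instance : DecidableRel (completeBipartiteGraph (Fin 3) (Fin 3)).Adj := fun a b => by
  simp only [completeBipartiteGraph_adj]; infer_instance

/-- Page assignment for `K₃,₃`: edge `(i, j)` goes to page `i + j (mod 3)`. -/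
def k33page : Sym2 (Fin 3 ⊕ Fin 3) → Fin 3 :=
  Sym2.lift ⟨fun v w => (Fin.ofNat 3 ((Sum.elim Fin.val Fin.val v + Sum.elim Fin.val Fin.val w : ℕ)) : Fin 3),
    fun v w => by simp [Nat.add_comm]⟩

/-- Spine positions for `K₃,₃`: alternate the two sides. -/
def k33pos : (Fin 3 ⊕ Fin 3) ↪ ℕ := ⟨Sum.elim (fun i => 2*i.val) (fun j => 2*j.val+1), by decide⟩

set_option synthInstance.maxSize 2000 in
/-- An explicit 3-page matching book embedding of `K₃,₃`. -/
def k33emb : MatchingBookEmbedding (completeBipartiteGraph (Fin 3) (Fin 3)) 3 where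
  pos := k33pos
  page := k33page
  nocross := by decide
  matching := by decide

/-- `K₃,₃` has matching book thickness 3, i.e. it is dispersable. -/
theorem stmt_15 : mbt (completeBipartiteGraph (Fin 3) (Fin 3)) = 3 := by
  have h3 : 3 ∈ {n | Nonempty (MatchingBookEmbedding (completeBipartiteGraph (Fin 3) (Fin 3)) n)} :=
    ⟨k33emb⟩
  refine le_antisymm (Nat.sInf_le h3) (le_csInf ⟨3, h3⟩ ?_)
  rintro n ⟨E⟩
  have hinj : Function.Injective (fun k : Fin 3 => E.page s(Sum.inl 0, Sum.inr k)) := by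
    intro k k' h
    by_contra hne
    exact E.matching (Sum.inl 0) (Sum.inr k) (Sum.inr k') (by simp) (by simp)
      (by simpa using hne) h
  simpa using Fintype.card_le_of_injective _ hinj
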